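/- arXiv:2001.08707 — 2 statements merged into one kernel-verified Lean document; each statement's English description precedes it below -/
import Mathlib

section
/- Suppose a sequence of vectors r_n satisfies the three-term recurrence r_{n+1} = (1 + α_n β_{n-1}/α_{n-1}) r_n − α_n A r_n − (α_n β_{n-1}/α_{n-1}) r_{n-1} with r_{-1} := r_0 and β_{-1}/α_{-1} := 0. Define scalars π_n^σ by π_0^σ = π_{-1}^σ = 1 and π_{n+1}^σ = (1 + α_n β_{n-1}/α_{n-1} + α_n σ) π_n^σ − (α_n β_{n-1}/α_{n-1}) π_{n-1}^σ, and assume π_n^σ ≠ 0 for all n. Then the vectors r_n^σ := r_n / π_n^σ satisfy the same three-term recurrence with A replaced by A + σI and coefficients α_n^σ = (π_n^σ/π_{n+1}^σ) α_n and β_n^σ = (π_n^σ/π_{n+1}^σ)² β_n. -/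
open Matrix

set_option maxHeartbeats 1000000

/-- The scaled residuals `r_n^σ = r_n / π_n^σ` satisfy the shifted three-term
recurrence with matrix `A + σI` and coefficients
`α_n^σ = (π_n^σ/π_{n+1}^σ) α_n`, `β_n^σ = (π_n^σ/π_{n+1}^σ)² β_n`. -/
theorem shifted_residual_recurrence {M : ℕ}
    (A : Matrix (Fin M) (Fin M) ℂ) (σ : ℂ)
    (r : ℕ → (Fin M → ℂ)) (α β : ℕ → ℂ)
    (hα : ∀ n, α n ≠ 0) (hβ : ∀ n, β n ≠ 0)
    -- three-term recurrence for the seed equation, with `r_{-1} := r_0` and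
    -- `β_{-1}/α_{-1} := 0` (base case `n = 0` written separately)
    (hbase : r 1 = r 0 - α 0 • (A *ᵥ r 0))
    (hrec : ∀ n, r (n + 2) = (1 + α (n + 1) * β n / α n) • r (n + 1)
        - α (n + 1) • (A *ᵥ r (n + 1))
        - (α (n + 1) * β n / α n) • r n)
    -- collinearity factors
    (π : ℕ → ℂ) (hπ0 : π 0 = 1)
    (hπ1 : π 1 = (1 + α 0 * σ) * π 0)
    (hπrec : ∀ n, π (n + 2) =
        (1 + α (n + 1) * β n / α n + α (n + 1) * σ) * π (n + 1)
        - (α (n + 1) * β n / α n) * π n)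
    (hπne : ∀ n, π n ≠ 0)
    -- shifted quantities
    (rσ : ℕ → (Fin M → ℂ)) (hrσ : ∀ n, rσ n = (π n)⁻¹ • r n)
    (ασ βσ : ℕ → ℂ)
    (hασ : ∀ n, ασ n = (π n / π (n + 1)) * α n)
    (hβσ : ∀ n, βσ n = (π n / π (n + 1)) ^ 2 * β n) :
    rσ 1 = rσ 0 - ασ 0 • ((A + σ • (1 : Matrix (Fin M) (Fin M) ℂ)) *ᵥ rσ 0) ∧
    ∀ n, rσ (n + 2) = (1 + ασ (n + 1) * βσ n / ασ n) • rσ (n + 1)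
        - ασ (n + 1) • ((A + σ • (1 : Matrix (Fin M) (Fin M) ℂ)) *ᵥ rσ (n + 1))
        - (ασ (n + 1) * βσ n / ασ n) • rσ n := by
  constructor
  · funext i
    have h1 : π 1 = 1 + α 0 * σ := by rw [hπ1, hπ0, mul_one]
    have hne1 : (1 : ℂ) + α 0 * σ ≠ 0 := h1 ▸ hπne 1
    simp only [hrσ, hασ, hbase, hπ0, h1, add_mulVec, smul_mulVec, one_mulVec,
      Matrix.mulVec_smul, Pi.sub_apply, Pi.smul_apply, Pi.add_apply, smul_eq_mul,
      mul_one, one_mul, inv_one, div_one]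
    field_simp
    ring
  · intro n
    have ha1 : ασ (n + 1) = α (n + 1) * π (n + 1) / π (n + 2) := by rw [hασ]; ring
    have hc : ασ (n + 1) * βσ n / ασ n = α (n + 1) * β n / α n * π n / π (n + 2) := by
      rw [hασ, hασ, hβσ]
      field_simp [hπne n, hπne (n+1), hπne (n+2), hα n, hα (n+1)]
    funext i
    have hp := hπrec n
    have hR := congrFun (hrec n) i
    simp only [Pi.sub_apply, Pi.smul_apply, Pi.add_apply, smul_eq_mul] at hR
    simp only [hrσ]
    simp only [hc]
    simp only [ha1, add_mulVec, smul_mulVec, one_mulVec,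
      Matrix.mulVec_smul, Pi.sub_apply, Pi.smul_apply, Pi.add_apply, smul_eq_mul]
    set c := α (n + 1) * β n / α n with hcdef
    rw [hR]
    field_simp [hπne n, hπne (n+1), hπne (n+2)]
    rw [hp]
    ring
end

section
/- Under the collinearity relation r_n^σ = r_n/π_n^σ, the recurrence π_{n+1}^σ = (1 + α_n β_{n-1}/α_{n-1} + α_n σ) π_n^σ − (α_n β_{n-1}/α_{n-1}) π_{n-1}^σ holds, given that r_n satisfies the three-term recurrence for A and r_n^σ satisfies the analogous recurrence for A+σI, provided r_{n-1}, r_n are linearly independent. -/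
open Matrix

/-- If the collinearity `r_m^σ = r_m / π_m^σ` holds and both `r` and `r^σ`
satisfy the corresponding three-term recurrences (for `A` and `A + σI`
respectively), then, provided `r_{n-1}` and `r_n` are linearly independent,
the collinearity factors satisfy
`π_{n+1}^σ = (1 + α_n β_{n-1}/α_{n-1} + α_n σ) π_n^σ − (α_n β_{n-1}/α_{n-1}) π_{n-1}^σ`. -/
theorem collinearity_factor_recurrence {M : ℕ}
    (A : Matrix (Fin M) (Fin M) ℂ) (σ : ℂ)
    -- r_{n-1}, r_n, r_{n+1} and α_{n-1}, α_n, β_{n-1}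
    (rm r rp : Fin M → ℂ) (αm αn βm : ℂ)
    (hαm : αm ≠ 0) (hαn : αn ≠ 0)
    -- collinearity factors π_{n-1}^σ, π_n^σ, π_{n+1}^σ
    (πm π πp : ℂ) (hπm : πm ≠ 0) (hπ : π ≠ 0) (hπp : πp ≠ 0)
    -- seed three-term recurrence
    (hseed : rp = (1 + αn * βm / αm) • r - αn • (A *ᵥ r) - (αn * βm / αm) • rm)
    -- shifted three-term recurrence for rσ_m = (π_m)⁻¹ • r_m with shifted
    -- coefficients ασ_n = (π_n/π_{n+1}) α_n, βσ_{n-1} = (π_{n-1}/π_n)² β_{n-1}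
    (hshift : πp⁻¹ • rp =
        (1 + ((π / πp) * αn) * (((πm / π) ^ 2) * βm) / ((πm / π) * αm)) • (π⁻¹ • r)
        - ((π / πp) * αn) • ((A + σ • (1 : Matrix (Fin M) (Fin M) ℂ)) *ᵥ (π⁻¹ • r))
        - (((π / πp) * αn) * (((πm / π) ^ 2) * βm) / ((πm / π) * αm)) • (πm⁻¹ • rm))
    (hindep : LinearIndependent ℂ ![rm, r]) :
    πp = (1 + αn * βm / αm + αn * σ) * π - (αn * βm / αm) * πm := by
  -- r and rm are nonzero / independent
  have hr : r ≠ 0 := hindep.ne_zero 1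
  have hrm : rm ≠ 0 := hindep.ne_zero 0
  -- rewrite the shifted recurrence using the seed recurrence
  rw [hseed] at hshift
  simp only [Matrix.add_mulVec, Matrix.smul_mulVec, Matrix.one_mulVec,
    Matrix.mulVec_smul] at hshift
  set v := A *ᵥ r with hv
  have hK : π / πp * αn * ((πm / π) ^ 2 * βm) / (πm / π * αm) = αn * βm * πm / (πp * αm) := by
    field_simp
  rw [hK] at hshift
  -- the r_{n-1} coefficients on both sides agree
  have hrm0 : (αn * βm * πm / (πp * αm)) * πm⁻¹ - (αn * βm / αm) * πp⁻¹ = 0 := by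
    field_simp
    ring
  -- the A*ᵥr coefficients on both sides agree
  have hv0 : (π / πp * αn) * π⁻¹ - αn * πp⁻¹ = 0 := by
    field_simp
    ring
  -- extract the coefficient identity for r
  have key : ((1 + αn * βm / αm) * πp⁻¹
      - ((1 + αn * βm * πm / (πp * αm)) * π⁻¹ - (π / πp * αn) * π⁻¹ * σ)) • r
      + ((αn * βm * πm / (πp * αm)) * πm⁻¹ - (αn * βm / αm) * πp⁻¹) • rm
      + ((π / πp * αn) * π⁻¹ - αn * πp⁻¹) • v = 0 := by
    linear_combination (norm := module) hshift
  rw [hrm0, hv0, zero_smul, zero_smul, add_zero, add_zero] at key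
  have hc : (1 + αn * βm / αm) * πp⁻¹
      - ((1 + αn * βm * πm / (πp * αm)) * π⁻¹ - (π / πp * αn) * π⁻¹ * σ) = 0 := by
    rcases smul_eq_zero.mp key with h | h
    · exact h
    · exact absurd h hr
  field_simp at hc
  have h2 : (πp ^ 2 * αm * π) *
      ((αm + αn * βm) * π - (πp * αm + αn * βm * πm) + αm * π * αn * σ) = 0 := by
    linear_combination (πp ^ 2 * αm * π) * hc
  have hc' : (αm + αn * βm) * π - (πp * αm + αn * βm * πm) + αm * π * αn * σ = 0 :=
    (mul_eq_zero.mp h2).resolve_left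
      (mul_ne_zero (mul_ne_zero (pow_ne_zero 2 hπp) hαm) hπ)
  field_simp
  linear_combination -hc'
end
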